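/- arXiv:2004.05034 — 2 statements merged into one kernel-verified Lean document; each statement's English description precedes it below -/
import Mathlib

section
/- Let f : ℝ≥0 → ℝ be locally integrable with F(s) := ∫₀ˢ f(u) du, and suppose |F(s)/s − L| ≤ C/(1+s)^κ for all s > 0 with constants C, κ > 0. Let h : [0,t] → ℝ be continuously differentiable. Then lim_{ε→0} ∫₀ᵗ h(s) f(s/ε) ds = L ∫₀ᵗ h(s) ds. -/
open MeasureTheory Filter Set Real intervalIntegral
open scoped Interval Topology

/-!
The substitution `u = s/ε` turns the primitive of `s ↦ f (s/ε)` into `ε F(r/ε) = r · F(r/ε)/(r/ε)`,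
which tends to `r L` as `ε → 0⁺` and is bounded by `r (|L| + |C|)` thanks to the ergodic bound.
Integrating by parts against the absolutely continuous weight `h` moves the derivative onto these
primitives: `∫₀ᵗ h(s) f(s/ε) ds = h(t) ε F(t/ε) - ∫₀ᵗ h'(r) ε F(r/ε) dr`, and dominated convergence
gives the limit `h(t) L t - ∫₀ᵗ h'(r) L r dr`, which is `L ∫₀ᵗ h` by the same integration by parts.
-/

theorem AbsolutelyContinuousOnInterval.integral_mul_eq_sub_integral_deriv_mul_primitive
    {h g : ℝ → ℝ} {a b : ℝ} (hh : AbsolutelyContinuousOnInterval h a b)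
    (hg : IntervalIntegrable g volume a b) :
    ∫ x in a..b, h x * g x
      = h b * (∫ x in a..b, g x) - ∫ x in a..b, deriv h x * ∫ y in a..x, g y := by
  have hG := hg.absolutelyContinuousOnInterval_intervalIntegral left_mem_uIcc
  have hderiv : ∀ᵐ x, x ∈ Ι a b → h x * g x = h x * deriv (fun x => ∫ y in a..x, g y) x := by
    filter_upwards [hg.ae_hasDerivAt_integral] with x hx hxab
    rw [(hx (uIoc_subset_uIcc hxab) a left_mem_uIcc).deriv]
  rw [integral_congr_ae hderiv, hh.integral_mul_deriv_eq_deriv_mul hG]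
  simp

theorem tendsto_integral_mul_of_tendsto_primitive {ι : Type*} {l : Filter ι}
    [l.IsCountablyGenerated] {g : ι → ℝ → ℝ} {g₀ h : ℝ → ℝ} {a b M : ℝ}
    (hh : AbsolutelyContinuousOnInterval h a b)
    (hg : ∀ᶠ i in l, IntervalIntegrable (g i) volume a b)
    (hg₀ : IntervalIntegrable g₀ volume a b)
    (hbound : ∀ᶠ i in l, ∀ x ∈ Ι a b, |∫ y in a..x, g i y| ≤ M)
    (hlim : ∀ x ∈ [[a, b]], Tendsto (fun i => ∫ y in a..x, g i y) l (𝓝 (∫ y in a..x, g₀ y))) :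
    Tendsto (fun i => ∫ x in a..b, h x * g i x) l (𝓝 (∫ x in a..b, h x * g₀ x)) := by
  have hbulk : Tendsto (fun i => ∫ x in a..b, deriv h x * ∫ y in a..x, g i y) l
      (𝓝 (∫ x in a..b, deriv h x * ∫ y in a..x, g₀ y)) := by
    refine tendsto_integral_filter_of_dominated_convergence (fun x => |deriv h x| * M) ?_ ?_
      (hh.intervalIntegrable_deriv.abs.mul_const M) ?_
    · filter_upwards [hg] with i hgi
      exact hh.intervalIntegrable_deriv.def'.aestronglyMeasurable.mul
        (((hgi.absolutelyContinuousOnInterval_intervalIntegral left_mem_uIcc).continuousOn.mono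
          uIoc_subset_uIcc).aestronglyMeasurable measurableSet_uIoc)
    · filter_upwards [hbound] with i hi
      refine ae_of_all _ fun x hx => ?_
      rw [norm_mul, Real.norm_eq_abs, Real.norm_eq_abs]
      exact mul_le_mul_of_nonneg_left (hi x hx) (abs_nonneg _)
    · exact ae_of_all _ fun x hx => (hlim x (uIoc_subset_uIcc hx)).const_mul _
  rw [hh.integral_mul_eq_sub_integral_deriv_mul_primitive hg₀]
  refine (((hlim b right_mem_uIcc).const_mul (h b)).sub hbulk).congr' ?_
  filter_upwards [hg] with i hgi
  rw [hh.integral_mul_eq_sub_integral_deriv_mul_primitive hgi]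

theorem tendsto_of_abs_sub_le_div_one_add_rpow {u : ℝ → ℝ} {L C κ : ℝ} (hκ : 0 < κ)
    (hu : ∀ s > 0, |u s - L| ≤ C / (1 + s) ^ κ) : Tendsto u atTop (𝓝 L) := by
  have hdecay : Tendsto (fun s : ℝ => C / (1 + s) ^ κ) atTop (𝓝 0) :=
    tendsto_const_nhds.div_atTop
      ((tendsto_rpow_atTop hκ).comp (tendsto_atTop_add_const_left _ 1 tendsto_id))
  refine tendsto_iff_norm_sub_tendsto_zero.2 (squeeze_zero_norm' ?_ hdecay)
  filter_upwards [eventually_gt_atTop 0] with s hs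
  simpa using hu s hs

theorem abs_le_of_abs_sub_le_div_one_add_rpow {u : ℝ → ℝ} {L C κ : ℝ} (hκ : 0 ≤ κ)
    (hu : ∀ s > 0, |u s - L| ≤ C / (1 + s) ^ κ) : ∀ s > 0, |u s| ≤ |L| + |C| := by
  intro s hs
  have hpow : 1 ≤ (1 + s) ^ κ := one_le_rpow (by linarith) hκ
  calc |u s| ≤ |L| + |u s - L| := by simpa using abs_add_le L (u s - L)
    _ ≤ |L| + C / (1 + s) ^ κ := by gcongr; exact hu s hs
    _ ≤ |L| + |C| / (1 + s) ^ κ := by gcongr; exact le_abs_self C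
    _ ≤ |L| + |C| := by gcongr; exact div_le_self (abs_nonneg C) hpow

theorem mul_apply_div_eq_mul_div_div {F : ℝ → ℝ} {ε r : ℝ} (hε : ε ≠ 0) (hr : r ≠ 0) :
    ε * F (r / ε) = r * (F (r / ε) / (r / ε)) := by
  field_simp

theorem tendsto_mul_apply_div_nhdsGT_zero {F : ℝ → ℝ} {L r : ℝ}
    (hF : Tendsto (fun s => F s / s) atTop (𝓝 L)) (hr : 0 < r) :
    Tendsto (fun ε => ε * F (r / ε)) (𝓝[>] 0) (𝓝 (r * L)) := by
  have hscale : Tendsto (fun ε : ℝ => r / ε) (𝓝[>] 0) atTop := by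
    simpa only [div_eq_mul_inv] using tendsto_inv_nhdsGT_zero.const_mul_atTop hr
  refine ((hF.comp hscale).const_mul r).congr' ?_
  filter_upwards [self_mem_nhdsWithin] with ε hε
  exact (mul_apply_div_eq_mul_div_div (ne_of_gt hε) hr.ne').symm

theorem abs_mul_apply_div_le {F : ℝ → ℝ} {M ε r : ℝ} (hM : ∀ s > 0, |F s / s| ≤ M)
    (hε : 0 < ε) (hr : 0 < r) : |ε * F (r / ε)| ≤ r * M := by
  rw [mul_apply_div_eq_mul_div_div hε.ne' hr.ne', abs_mul, abs_of_pos hr]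
  exact mul_le_mul_of_nonneg_left (hM _ (div_pos hr hε)) hr.le

theorem MeasureTheory.LocallyIntegrable.intervalIntegrable_comp_div {f : ℝ → ℝ}
    (hf : LocallyIntegrable f volume) {c : ℝ} (hc : c ≠ 0) (a b : ℝ) :
    IntervalIntegrable (fun x => f (x / c)) volume a b := by
  have := (IntervalIntegrable.comp_mul_left_iff (inv_ne_zero hc) (a := a / c) (b := b / c)).2
    (hf.integrableOn_isCompact isCompact_uIcc).intervalIntegrable
  simpa [div_eq_inv_mul, hc] using this

theorem homogenization_lemma_general
    (f : ℝ → ℝ) (hf : LocallyIntegrable f volume)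
    (L C κ t : ℝ) (hκ : 0 < κ) (ht : 0 < t)
    (herg : ∀ s > (0:ℝ),
      |(∫ u in (0:ℝ)..s, f u) / s - L| ≤ C / (1 + s) ^ κ)
    (h : ℝ → ℝ) (hh : ContDiffOn ℝ 1 h (Set.Icc 0 t)) :
    Tendsto (fun ε : ℝ => ∫ s in (0:ℝ)..t, h s * f (s / ε))
      (nhdsWithin 0 (Set.Ioi 0)) (nhds (L * ∫ s in (0:ℝ)..t, h s)) := by
  set F : ℝ → ℝ := fun s => ∫ u in (0:ℝ)..s, f u
  have hrescale : ∀ ε > (0:ℝ), ∀ r, ∫ s in (0:ℝ)..r, f (s / ε) = ε * F (r / ε) := by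
    intro ε hε r
    simp [F, intervalIntegral.integral_comp_div f hε.ne']
  have hbound : ∀ᶠ ε in 𝓝[>] 0, ∀ r ∈ Ι 0 t, |∫ s in (0:ℝ)..r, f (s / ε)| ≤ t * (|L| + |C|) := by
    filter_upwards [self_mem_nhdsWithin] with ε hε r hr
    rw [uIoc_of_le ht.le] at hr
    rw [hrescale ε hε]
    exact (abs_mul_apply_div_le (abs_le_of_abs_sub_le_div_one_add_rpow hκ.le herg) hε hr.1).trans
      (by gcongr; exact hr.2)
  have hlim : ∀ r ∈ [[0, t]], Tendsto (fun ε => ∫ s in (0:ℝ)..r, f (s / ε)) (𝓝[>] 0)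
      (𝓝 (∫ _ in (0:ℝ)..r, L)) := by
    intro r hr
    rw [uIcc_of_le ht.le] at hr
    rcases hr.1.eq_or_lt with rfl | hr0
    · simp
    rw [intervalIntegral.integral_const, sub_zero, smul_eq_mul]
    refine (tendsto_mul_apply_div_nhdsGT_zero (tendsto_of_abs_sub_le_div_one_add_rpow hκ herg)
      hr0).congr' ?_
    filter_upwards [self_mem_nhdsWithin] with ε hε
    exact (hrescale ε hε r).symm
  have hhac : AbsolutelyContinuousOnInterval h 0 t :=
    (uIcc_of_le ht.le ▸ hh).absolutelyContinuousOnInterval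
  simpa [intervalIntegral.integral_mul_const, mul_comm] using
    tendsto_integral_mul_of_tendsto_primitive (l := 𝓝[>] 0) hhac
      (eventually_mem_nhdsWithin.mono fun ε hε => hf.intervalIntegrable_comp_div (ne_of_gt hε) 0 t)
      intervalIntegrable_const hbound hlim

/-- Homogenization lemma: if the averages `F(s)/s` of a locally integrable
function `f` converge to `L` at a quantitative rate, then for any `C¹`
weight `h` on `[0,t]` the fast-oscillating integrals
`∫₀ᵗ h(s) f(s/ε) ds` converge to `L ∫₀ᵗ h(s) ds` as `ε → 0⁺`. -/
theorem homogenization_lemma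
    (f : ℝ → ℝ) (hf : LocallyIntegrable f volume)
    (L C κ t : ℝ) (hκ : 0 < κ) (hC : 0 < C) (ht : 0 < t)
    (herg : ∀ s > (0:ℝ),
      |(∫ u in (0:ℝ)..s, f u) / s - L| ≤ C / (1 + s) ^ κ)
    (h : ℝ → ℝ) (hh : ContDiffOn ℝ 1 h (Set.Icc 0 t)) :
    Tendsto (fun ε : ℝ => ∫ s in (0:ℝ)..t, h s * f (s / ε))
      (nhdsWithin 0 (Set.Ioi 0)) (nhds (L * ∫ s in (0:ℝ)..t, h s)) :=
  homogenization_lemma_general f hf L C κ t hκ ht herg h hh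
end

section
/- Let Ψ : [0,∞) × ℝ^d → ℝ be bounded and uniformly continuous in both variables jointly, and let Z : [0,∞) → ℝ^d be a fixed measurable path such that for every s ≥ 0, lim_{T→∞} (1/T)∫₀^T Ψ(s, Z_u) du = ∫ Ψ(s,y) π(dy) for a probability measure π, with this convergence uniform in s. Then for every t > 0, lim_{ε→0} ∫₀ᵗ Ψ(s, Z_{s/ε}) ds = ∫₀ᵗ (∫ Ψ(s,y) π(dy)) ds. -/
/-!
Freeze the slow variable on a uniform partition `0 = t₀ < ⋯ < tₙ = t` whose mesh is below the
`δ`-modulus of uniform continuity of `Ψ`: this moves both `∫₀ᵗ Ψ(s, Z_{s/ε}) ds` and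
`∫₀ᵗ ∫ Ψ(s, ·) dπ ds` by at most `δ t`, uniformly in `ε`. On each `[tᵢ, tᵢ₊₁]` the substitution
`u = s/ε` turns the frozen integral into `ε` times a difference of ergodic integrals over
`[0, tᵢ₊₁/ε]` and `[0, tᵢ/ε]`, which converges to `(tᵢ₊₁ - tᵢ) ∫ Ψ(tᵢ, ·) dπ`.
-/

open MeasureTheory Filter Set Topology

theorem tendsto_nhds_of_forall_approx {α E : Type*} [PseudoMetricSpace E] {l : Filter α}
    {f : α → E} {L : E}
    (h : ∀ δ > 0, ∃ (g : α → E) (M : E),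
      Tendsto g l (𝓝 M) ∧ (∀ᶠ x in l, dist (f x) (g x) ≤ δ) ∧ dist M L ≤ δ) :
    Tendsto f l (𝓝 L) := by
  refine Metric.tendsto_nhds.mpr fun e he => ?_
  obtain ⟨g, M, hgM, hfg, hML⟩ := h (e / 3) (by positivity)
  filter_upwards [hfg, Metric.tendsto_nhds.mp hgM (e / 3) (by positivity)] with x hfgx hgx
  calc dist (f x) L ≤ dist (f x) (g x) + dist (g x) M + dist M L := dist_triangle4 _ _ _ _
    _ < e := by linarith

theorem Measurable.intervalIntegrable_of_abs_le {μ : Measure ℝ} [IsLocallyFiniteMeasure μ]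
    {f : ℝ → ℝ} {K : ℝ} (hf : Measurable f) (hK : ∀ x, |f x| ≤ K) (a b : ℝ) :
    IntervalIntegrable f μ a b :=
  intervalIntegrable_const.mono_fun' hf.aestronglyMeasurable (ae_of_all _ hK)

theorem exists_abs_sub_lt_of_uniformContinuous_uncurry {Y : Type*} [PseudoMetricSpace Y]
    {Ψ : ℝ → Y → ℝ} (hΨ : UniformContinuous fun p : ℝ × Y => Ψ p.1 p.2) {δ : ℝ} (hδ : 0 < δ) :
    ∃ η > 0, ∀ r s y, |s - r| < η → |Ψ s y - Ψ r y| < δ := by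
  obtain ⟨η, hη, hΨη⟩ := Metric.uniformContinuous_iff.mp hΨ δ hδ
  refine ⟨η, hη, fun r s y hrs => ?_⟩
  have hdist : dist (s, y) (r, y) < η := by simpa [Prod.dist_eq, Real.dist_eq] using hrs
  simpa [Real.dist_eq] using hΨη hdist

theorem abs_integral_sub_integral_le {α : Type*} [MeasurableSpace α] {μ : Measure α}
    [IsProbabilityMeasure μ] {f g : α → ℝ} {C : ℝ} (hf : Integrable f μ) (hg : Integrable g μ)
    (hfg : ∀ x, |f x - g x| ≤ C) : |∫ x, f x ∂μ - ∫ x, g x ∂μ| ≤ C := by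
  rw [← integral_sub hf hg]
  simpa using norm_integral_le_of_norm_le_const (μ := μ)
    (ae_of_all _ fun x => (Real.norm_eq_abs _).trans_le (hfg x))

theorem continuous_integral_of_continuous_uncurry_of_abs_le {X Y : Type*} [TopologicalSpace X]
    [FirstCountableTopology X] [TopologicalSpace Y] [MeasurableSpace Y] [OpensMeasurableSpace Y]
    {μ : Measure Y} [IsFiniteMeasure μ] {Ψ : X → Y → ℝ} {K : ℝ}
    (hΨ : Continuous fun p : X × Y => Ψ p.1 p.2) (hK : ∀ s y, |Ψ s y| ≤ K) :
    Continuous fun s => ∫ y, Ψ s y ∂μ :=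
  continuous_of_dominated
    (fun _ => (hΨ.comp (continuous_const.prodMk continuous_id)).aestronglyMeasurable)
    (fun s => ae_of_all _ (hK s)) (integrable_const K)
    (ae_of_all _ fun _ => hΨ.comp (continuous_id.prodMk continuous_const))

section VectorValued

variable {E : Type*} [NormedAddCommGroup E] [NormedSpace ℝ E] {g : ℝ → E} {L : E}

theorem tendsto_smul_integral_div_of_tendsto_average {a : ℝ} (ha : 0 ≤ a)
    (h : Tendsto (fun T : ℝ => (1 / T) • ∫ u in (0 : ℝ)..T, g u) atTop (𝓝 L)) :
    Tendsto (fun ε : ℝ => ε • ∫ u in (0 : ℝ)..a / ε, g u) (𝓝[>] 0) (𝓝 (a • L)) := by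
  rcases ha.eq_or_lt with rfl | ha
  · simp
  have h_div : Tendsto (fun ε : ℝ => a / ε) (𝓝[>] 0) atTop := by
    simpa only [div_eq_mul_inv] using tendsto_inv_nhdsGT_zero.const_mul_atTop ha
  refine ((h.comp h_div).const_smul a).congr' ?_
  filter_upwards [self_mem_nhdsWithin] with ε hε
  simp only [Function.comp_apply, smul_smul, one_div_div]
  rw [mul_div_cancel₀ _ ha.ne']

theorem tendsto_integral_comp_div_of_tendsto_average {a b : ℝ} (ha : 0 ≤ a) (hb : 0 ≤ b)
    (hg : ∀ x, IntervalIntegrable g volume 0 x)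
    (h : Tendsto (fun T : ℝ => (1 / T) • ∫ u in (0 : ℝ)..T, g u) atTop (𝓝 L)) :
    Tendsto (fun ε : ℝ => ∫ s in a..b, g (s / ε)) (𝓝[>] 0) (𝓝 ((b - a) • L)) := by
  rw [sub_smul]
  refine ((tendsto_smul_integral_div_of_tendsto_average hb h).sub
    (tendsto_smul_integral_div_of_tendsto_average ha h)).congr' ?_
  filter_upwards [self_mem_nhdsWithin] with ε hε
  rw [intervalIntegral.integral_comp_div _ (ne_of_gt hε), ← smul_sub,
    intervalIntegral.integral_interval_sub_left (hg _) (hg _)]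

theorem norm_integral_sub_sum_integral_frozen_le {Φ : ℝ → ℝ → E} {t C : ℝ} {n : ℕ} (ht : 0 ≤ t)
    (hn : 0 < n) (hdiag : ∀ a b, IntervalIntegrable (fun s => Φ s s) volume a b)
    (hfrozen : ∀ r a b, IntervalIntegrable (Φ r) volume a b)
    (hΦ : ∀ r s, |s - r| ≤ t / n → ‖Φ s s - Φ r s‖ ≤ C) :
    ‖(∫ s in (0 : ℝ)..t, Φ s s) -
        ∑ i ∈ Finset.range n, ∫ s in (i * t / n)..((i + 1) * t / n), Φ (i * t / n) s‖ ≤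
      C * t := by
  set a : ℕ → ℝ := fun i => i * t / n with ha
  have hmesh : 0 ≤ t / n := by positivity
  have hstep : ∀ i, a (i + 1) - a i = t / n := fun i => by simp only [ha]; push_cast; ring
  have hpiece : ∀ i, ‖∫ s in a i..a (i + 1), (Φ s s - Φ (a i) s)‖ ≤ C * (t / n) := by
    intro i
    have hle : a i ≤ a (i + 1) := by linarith [hstep i]
    calc _ ≤ C * |a (i + 1) - a i| :=
          intervalIntegral.norm_integral_le_of_norm_le_const fun s hs => hΦ _ _ (by
            rw [uIoc_of_le hle] at hs
            rw [abs_of_nonneg (by linarith [hs.1])]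
            linarith [hs.2, hstep i])
      _ = C * (t / n) := by rw [hstep, abs_of_nonneg hmesh]
  have hsplit :
      (∫ s in (0 : ℝ)..t, Φ s s) - ∑ i ∈ Finset.range n, ∫ s in a i..a (i + 1), Φ (a i) s =
        ∑ i ∈ Finset.range n, ∫ s in a i..a (i + 1), (Φ s s - Φ (a i) s) := by
    have h0 : a 0 = 0 := by simp [ha]
    have hn' : a n = t := by simp only [ha]; field_simp
    rw [← h0, ← hn', ← intervalIntegral.sum_integral_adjacent_intervals fun k _ => hdiag _ _,
      ← Finset.sum_sub_distrib]
    exact Finset.sum_congr rfl fun i _ =>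
      (intervalIntegral.integral_sub (hdiag _ _) (hfrozen _ _ _)).symm
  have hnode : ∀ i : ℕ, ((i : ℝ) + 1) * t / n = a (i + 1) := fun i => by simp [ha]
  simp only [hnode]
  calc _ = ‖∑ i ∈ Finset.range n, ∫ s in a i..a (i + 1), (Φ s s - Φ (a i) s)‖ := by rw [hsplit]
    _ ≤ ∑ _i ∈ Finset.range n, C * (t / n) := norm_sum_le_of_le _ fun i _ => hpiece i
    _ = C * t := by simp only [Finset.sum_const, Finset.card_range, nsmul_eq_mul]; field_simp

end VectorValued

/-- Section 5.1 generalization: for a bounded, jointly uniformly continuous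
intensity `Ψ` and a path `Z` whose ergodic averages of `Ψ(s, Z_·)` converge
uniformly in `s` to the `π`-average, the fast-oscillating integral
`∫₀ᵗ Ψ(s, Z_{s/ε}) ds` converges to `∫₀ᵗ ∫ Ψ(s,y) pim(dy) ds`. -/
theorem general_intensity_homogenization
    {dd : ℕ} (Ψ : ℝ → (Fin dd → ℝ) → ℝ)
    (hΨ_bdd : ∃ K : ℝ, ∀ s y, |Ψ s y| ≤ K)
    (hΨ_uc : UniformContinuous (fun p : ℝ × (Fin dd → ℝ) => Ψ p.1 p.2))
    (Z : ℝ → (Fin dd → ℝ)) (hZ : Measurable Z)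
    (pim : Measure (Fin dd → ℝ)) [IsProbabilityMeasure pim]
    (herg : TendstoUniformly
      (fun T : ℝ => fun s : ℝ => (1 / T) * ∫ u in (0:ℝ)..T, Ψ s (Z u))
      (fun s : ℝ => ∫ y, Ψ s y ∂pim) atTop) :
    ∀ t > (0:ℝ),
      Tendsto (fun ε : ℝ => ∫ s in (0:ℝ)..t, Ψ s (Z (s / ε)))
        (nhdsWithin 0 (Set.Ioi 0))
        (nhds (∫ s in (0:ℝ)..t, ∫ y, Ψ s y ∂pim)) := by
  obtain ⟨K, hK⟩ := hΨ_bdd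
  have hΨc : Continuous fun p : ℝ × (Fin dd → ℝ) => Ψ p.1 p.2 := hΨ_uc.continuous
  have hint_π : ∀ s, Integrable (Ψ s) pim := fun s =>
    .of_bound (hΨc.comp (continuous_const.prodMk continuous_id)).aestronglyMeasurable K
      (ae_of_all _ (hK s))
  have hint_path : ∀ φ ψ : ℝ → ℝ, Measurable φ → Measurable ψ →
      ∀ a b, IntervalIntegrable (fun s => Ψ (φ s) (Z (ψ s))) volume a b := fun _ _ hφ hψ =>
    (hΨc.measurable.comp (hφ.prodMk (hZ.comp hψ))).intervalIntegrable_of_abs_le fun _ => hK _ _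
  intro t ht
  refine tendsto_nhds_of_forall_approx fun δ hδ => ?_
  obtain ⟨η, hη, hmod⟩ := exists_abs_sub_lt_of_uniformContinuous_uncurry hΨ_uc (div_pos hδ ht)
  obtain ⟨n, hn⟩ := exists_nat_gt (t / η)
  have hn0 : 0 < n := by exact_mod_cast (div_pos ht hη).trans hn
  have hmesh : t / n < η := (div_lt_comm₀ hη (by positivity)).mp hn
  refine ⟨fun ε => ∑ i ∈ Finset.range n,
      ∫ s in (i * t / n)..((i + 1) * t / n), Ψ (i * t / n) (Z (s / ε)),
    ∑ i ∈ Finset.range n, ∫ s in (i * t / n)..((i + 1) * t / n), ∫ y, Ψ (i * t / n) y ∂pim,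
    ?_, ?_, ?_⟩
  · refine tendsto_finsetSum _ fun i _ => ?_
    rw [intervalIntegral.integral_const]
    exact tendsto_integral_comp_div_of_tendsto_average (by positivity) (by positivity)
      (hint_path (fun _ => _) id measurable_const measurable_id 0) (herg.tendsto_at _)
  · refine Eventually.of_forall fun ε => ?_
    rw [dist_eq_norm, ← div_mul_cancel₀ δ ht.ne']
    exact norm_integral_sub_sum_integral_frozen_le (Φ := fun r s => Ψ r (Z (s / ε))) ht.le hn0
      (hint_path id (· / ε) measurable_id (measurable_id.div_const ε))
      (fun r => hint_path (fun _ => r) (· / ε) measurable_const (measurable_id.div_const ε))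
      fun r s h => (hmod r s _ (h.trans_lt hmesh)).le
  · rw [dist_comm, dist_eq_norm, ← div_mul_cancel₀ δ ht.ne']
    exact norm_integral_sub_sum_integral_frozen_le (Φ := fun r _ => ∫ y, Ψ r y ∂pim) ht.le hn0
      (continuous_integral_of_continuous_uncurry_of_abs_le hΨc hK).intervalIntegrable
      (fun _ _ _ => intervalIntegrable_const) fun r s h =>
        abs_integral_sub_integral_le (hint_π s) (hint_π r) fun y =>
          (hmod r s y (h.trans_lt hmesh)).le
end
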